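/- arXiv:2306.01023 — 3 statements merged into one kernel-verified Lean document; each statement's English description precedes it below -/
import Mathlib

section
/- With the notation of the test-function construction (v(x) = 1/2 − δ^{−1}(x₁ − x⁰₁) + 8(εδ)^{−2}‖x' − x⁰'‖², w(x) = 2ε^{−1}(1 − δ^{−1}(x₁ − x⁰₁)), χ smooth vanishing on [1, ∞), β smooth with β' supported in [−1, −1/2]), the function h = (χ∘v)(β'∘w)·(Xw) satisfies: on supp(h), δ(1 + ε/4) ≤ x₁ − x⁰₁ ≤ δ(1 + ε/2) and 8(εδ)^{−2}‖x' − x⁰'‖² ≤ 3/2 + ε/2. Consequently, if 0 < ε ≤ 1 and X(x⁰) = (1, 0, …, 0), then supp(h) ⊆ B(x⁰ + δ X(x⁰), εδ). -/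
open Set Metric

noncomputable section

abbrev Euc (d : ℕ) := EuclideanSpace ℝ (Fin d)

/-- `v(x) = 1/2 - δ⁻¹(x₁ - x⁰₁) + 8(εδ)⁻²‖xᵖ - x⁰ᵖ‖²`, where `x₁ = x 0` and
`xᵖ` denotes the remaining coordinates. -/
def vfun {m : ℕ} (x0 : Euc (m+1)) (ε δ : ℝ) (x : Euc (m+1)) : ℝ :=
  1/2 - (x 0 - x0 0) / δ + 8 / (ε * δ)^2 * ∑ i : Fin m, (x i.succ - x0 i.succ)^2

/-- `w(x) = 2ε⁻¹(1 - δ⁻¹(x₁ - x⁰₁))`. -/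
def wfun {m : ℕ} (x0 : Euc (m+1)) (ε δ : ℝ) (x : Euc (m+1)) : ℝ :=
  2 / ε * (1 - (x 0 - x0 0) / δ)

theorem stmt_8 {m : ℕ} (x0 : Euc (m+1)) (ε δ : ℝ) (hε : 0 < ε) (hδ : 0 < δ)
    (X : Euc (m+1) → Euc (m+1)) (hX : Continuous X)
    (χ β : ℝ → ℝ) (hχ : ContDiff ℝ (⊤ : ℕ∞) χ) (hχ0 : ∀ s : ℝ, 1 ≤ s → χ s = 0)
    (hβ : ContDiff ℝ (⊤ : ℕ∞) β)
    (hβ' : ∀ s : ℝ, s ∉ Set.Icc (-1 : ℝ) (-(1/2 : ℝ)) → deriv β s = 0)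
    -- `h = (χ∘v)(β'∘w)·(Xw)`, with `Xw x = ⟨X(x), ∇w(x)⟩ = (X x)₁ · (-2/(εδ))`
    (h : Euc (m+1) → ℝ)
    (hdef : h = fun x => χ (vfun x0 ε δ x) * deriv β (wfun x0 ε δ x) *
      (X x 0 * (-(2 / (ε * δ))))) :
    (∀ x ∈ tsupport h,
        δ * (1 + ε/4) ≤ x 0 - x0 0 ∧ x 0 - x0 0 ≤ δ * (1 + ε/2) ∧
        8 / (ε * δ)^2 * ∑ i : Fin m, (x i.succ - x0 i.succ)^2 ≤ 3/2 + ε/2) ∧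
    (ε ≤ 1 → X x0 = EuclideanSpace.single 0 1 →
      tsupport h ⊆ Metric.ball (x0 + δ • X x0) (ε * δ)) := by
  have hεδ : (0:ℝ) < ε * δ := mul_pos hε hδ
  set S : Set (Euc (m+1)) := {x | δ * (1 + ε/4) ≤ x 0 - x0 0 ∧ x 0 - x0 0 ≤ δ * (1 + ε/2) ∧
      8 / (ε * δ)^2 * ∑ i : Fin m, (x i.succ - x0 i.succ)^2 ≤ 3/2 + ε/2} with hS
  have hcont0 : Continuous fun x : Euc (m+1) => x 0 - x0 0 :=
    ((EuclideanSpace.proj (0 : Fin (m+1))).continuous).sub continuous_const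
  have hcontQ : Continuous fun x : Euc (m+1) =>
      8 / (ε * δ)^2 * ∑ i : Fin m, (x i.succ - x0 i.succ)^2 := by
    apply Continuous.mul continuous_const
    apply continuous_finset_sum
    intro i _
    exact (((EuclideanSpace.proj (i.succ : Fin (m+1))).continuous).sub continuous_const).pow 2
  have hSclosed : IsClosed S := by
    apply IsClosed.inter (isClosed_le continuous_const hcont0)
    exact IsClosed.inter (isClosed_le hcont0 continuous_const)
      (isClosed_le hcontQ continuous_const)
  have hsupp : Function.support h ⊆ S := by
    intro x hx
    rw [hdef] at hx
    simp only [Function.mem_support, ne_eq] at hx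
    have hχne : χ (vfun x0 ε δ x) ≠ 0 := fun h0 => hx (by rw [h0]; ring)
    have hβne : deriv β (wfun x0 ε δ x) ≠ 0 := fun h0 => hx (by rw [h0]; ring)
    have hv : vfun x0 ε δ x < 1 := by
      by_contra hc
      exact hχne (hχ0 _ (le_of_not_gt hc))
    have hw : wfun x0 ε δ x ∈ Set.Icc (-1 : ℝ) (-(1/2 : ℝ)) := by
      by_contra hc
      exact hβne (hβ' _ hc)
    obtain ⟨hw1, hw2⟩ := hw
    unfold wfun at hw1 hw2
    unfold vfun at hv
    set t := x 0 - x0 0 with ht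
    set Q := ∑ i : Fin m, (x i.succ - x0 i.succ)^2 with hQ
    have h1 : δ * (1 + ε/4) ≤ t := by
      rw [div_mul_eq_mul_div, div_le_iff₀ hε] at hw2
      have htd : 1 + ε/4 ≤ t / δ := by linarith
      nlinarith [(le_div_iff₀ hδ).mp htd]
    have h2 : t ≤ δ * (1 + ε/2) := by
      rw [div_mul_eq_mul_div, le_div_iff₀ hε] at hw1
      have : -(ε/2) ≤ 1 - t / δ := by linarith
      have htd : t / δ ≤ 1 + ε/2 := by linarith
      calc t = t / δ * δ := by field_simp
        _ ≤ (1 + ε/2) * δ := by nlinarith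
        _ = δ * (1 + ε/2) := by ring
    have h3 : 8 / (ε * δ)^2 * Q ≤ 3/2 + ε/2 := by
      have htd : t / δ ≤ 1 + ε/2 := by
        rw [div_le_iff₀ hδ]; linarith
      linarith
    exact ⟨h1, h2, h3⟩
  have hts : tsupport h ⊆ S := closure_minimal hsupp hSclosed
  refine ⟨fun x hx => hts hx, ?_⟩
  intro hε1 hX0 x hx
  obtain ⟨h1, h2, h3⟩ := hts hx
  rw [Metric.mem_ball, EuclideanSpace.dist_eq]
  have hy : ∀ i : Fin (m+1), (x0 + δ • X x0) i = x0 i + δ * (X x0 i) := by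
    intro i; rfl
  have hQ : ∑ i : Fin m, (x i.succ - x0 i.succ)^2 ≤ (ε * δ)^2 / 4 := by
    have h8 : (0:ℝ) < 8 / (ε * δ)^2 := by positivity
    have := (le_div_iff₀' h8).mpr h3
    calc ∑ i : Fin m, (x i.succ - x0 i.succ)^2 ≤ (3/2 + ε/2) / (8 / (ε * δ)^2) := this
      _ = (3/2 + ε/2) * (ε * δ)^2 / 8 := by field_simp
      _ ≤ 2 * (ε * δ)^2 / 8 := by nlinarith [sq_nonneg (ε * δ)]
      _ = (ε * δ)^2 / 4 := by ring
  have key : ∑ i : Fin (m+1), dist (x i) ((x0 + δ • X x0) i) ^ 2 < (ε * δ)^2 := by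
    rw [Fin.sum_univ_succ]
    have hd0 : dist (x 0) ((x0 + δ • X x0) 0) ^ 2 ≤ (ε * δ)^2 / 4 := by
      rw [hy 0, hX0, EuclideanSpace.single_apply, if_pos rfl, Real.dist_eq, sq_abs]
      have : x 0 - (x0 0 + δ * 1) = (x 0 - x0 0) - δ := by ring
      rw [this]
      nlinarith
    have hdsucc : ∀ i : Fin m, dist (x i.succ) ((x0 + δ • X x0) i.succ) ^ 2
        = (x i.succ - x0 i.succ)^2 := by
      intro i
      rw [hy i.succ, hX0, EuclideanSpace.single_apply, if_neg (by simp [Fin.succ_ne_zero]),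
        Real.dist_eq, sq_abs]
      ring_nf
    rw [Finset.sum_congr rfl (fun i _ => hdsucc i)]
    nlinarith [sq_nonneg (ε * δ)]
  calc Real.sqrt (∑ i : Fin (m+1), dist (x i) ((x0 + δ • X x0) i) ^ 2)
      < Real.sqrt ((ε * δ)^2) := by
        apply Real.sqrt_lt_sqrt _ key
        positivity
    _ = ε * δ := Real.sqrt_sq hεδ.le
end
end

section
/- Let X be a continuous vector field on an open set Ω ⊆ ℝ^d, K ⊆ Ω compact with 0 < c_K ≤ ‖X‖ ≤ C_K on K, and assume (after rotation and dilation) X(x⁰) = (1, 0, …, 0) for x⁰ ∈ K. For 0 < ε ≤ 1 there exists δ₀ > 0, uniform in x⁰ ∈ K, such that for all 0 < δ ≤ δ₀, the function g(x) = χ'(v(x)) β(w(x)) (X v)(x) is nonnegative on ℝ^d and strictly positive in a neighborhood of x⁰, where v(x) = 1/2 − δ^{−1}(x₁ − x⁰₁) + 8(εδ)^{−2}‖x' − x⁰'‖², w(x) = 2ε^{−1}(1 − δ^{−1}(x₁ − x⁰₁)), χ(s) = 1_{s<1} exp(1/(s−1)), and β is smooth, nonnegative, β ≡ 0 on (−∞,−1],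 β' > 0 on (−1,−1/2), β ≡ 1 on [−1/2,∞). -/
open Set Metric

noncomputable section

/-- `χ(s) = 1_{s<1} exp(1/(s-1))`. -/
def chi (s : ℝ) : ℝ := if s < 1 then Real.exp (1 / (s - 1)) else 0

/-- `Xv(x) = ⟨X(x), ∇v(x)⟩` computed explicitly for the quadratic `v`. -/
def Xv {m : ℕ} (X : Euc (m+1) → Euc (m+1)) (x0 : Euc (m+1)) (ε δ : ℝ)
    (x : Euc (m+1)) : ℝ :=
  X x 0 * (-(1/δ)) + 16 / (ε * δ)^2 * ∑ i : Fin m, X x i.succ * (x i.succ - x0 i.succ)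

/-- The function `g = χ'(v) β(w) (Xv)`. -/
def gtest {m : ℕ} (X : Euc (m+1) → Euc (m+1)) (β : ℝ → ℝ) (x0 : Euc (m+1))
    (ε δ : ℝ) (x : Euc (m+1)) : ℝ :=
  deriv chi (vfun x0 ε δ x) * β (wfun x0 ε δ x) * Xv X x0 ε δ x

lemma helper_Tle (η c T A S : ℝ) (hη0 : 0 < η) (hc : 0 ≤ c) (hA0 : 0 ≤ A)
    (hA : A < η^2) (hS0 : 0 ≤ S) (hSb : S < c^2) (hCS : T^2 ≤ A * S) :
    T ≤ η * c := by
  rcases eq_or_lt_of_le hc with hc0 | hc0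
  · exfalso; nlinarith
  · have h1 : A * S ≤ A * c^2 := mul_le_mul_of_nonneg_left hSb.le hA0
    have h2 : A * c^2 < η^2 * c^2 := mul_lt_mul_of_pos_right hA (by positivity)
    have h3 : T^2 < (η*c)^2 := by nlinarith
    by_contra h
    push_neg at h
    have h4 : (η*c)^2 < T^2 :=
      pow_lt_pow_left₀ h (mul_nonneg hη0.le hc) two_ne_zero
    linarith

lemma helper_final (ε δ η X0 T : ℝ) (hε0 : 0 < ε) (hε1 : ε ≤ 1) (hδ0 : 0 < δ)
    (hη : η = ε/32) (hX0 : 1 - η < X0) (hT : T ≤ η * (ε*δ/2)) :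
    X0 * (-(1/δ)) + 16 / (ε*δ)^2 * T < 0 := by
  subst hη
  have e1 : 16/(ε*δ)^2 * T ≤ 16/(ε*δ)^2 * (ε/32 * (ε*δ/2)) :=
    mul_le_mul_of_nonneg_left hT (by positivity)
  have e2 : 16/(ε*δ)^2 * (ε/32 * (ε*δ/2)) = 1/(4*δ) := by
    field_simp
    ring
  have e3 : X0 * (-(1/δ)) < (1 - ε/32) * (-(1/δ)) := by
    apply mul_lt_mul_of_neg_right hX0
    have : 0 < 1/δ := by positivity
    linarith
  have e4 : (1 - ε/32) * (-(1/δ)) + 1/(4*δ) < 0 := by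
    have h1 : (1 - ε/32) * (-(1/δ)) + 1/(4*δ) = -(1 - ε/32 - 1/4) / δ := by
      field_simp
      ring
    rw [h1]
    apply div_neg_of_neg_of_pos _ hδ0
    nlinarith
  rw [e2] at e1
  linarith

lemma chi_nonneg (s : ℝ) : 0 ≤ chi s := by
  unfold chi; split
  · exact (Real.exp_pos _).le
  · exact le_refl _

lemma deriv_chi_neg {s : ℝ} (h : s < 1) : deriv chi s < 0 := by
  have hne : s - 1 ≠ 0 := by intro h'; nlinarith [sub_eq_zero.mp h']
  have h1 : HasDerivAt (fun t : ℝ => (t - 1)⁻¹) (-1 / (s - 1) ^ 2) s := by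
    exact ((hasDerivAt_id s).sub_const 1).inv hne
  have h2 := h1.exp
  have heq : chi =ᶠ[nhds s] fun t => Real.exp ((t - 1)⁻¹) := by
    filter_upwards [isOpen_Iio.mem_nhds h] with t ht
    simp [chi, if_pos (show t < 1 from ht), one_div]
  rw [heq.deriv_eq, h2.deriv]
  have hsq : (0:ℝ) < (s - 1)^2 := by positivity
  exact mul_neg_of_pos_of_neg (Real.exp_pos _)
    (div_neg_of_neg_of_pos (by norm_num) hsq)

lemma deriv_chi_of_ge {s : ℝ} (h : 1 ≤ s) : deriv chi s = 0 := by
  rcases eq_or_lt_of_le h with h | h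
  · subst h
    apply IsLocalMin.deriv_eq_zero
    apply Filter.Eventually.of_forall
    intro t
    have : chi 1 = 0 := by simp [chi]
    rw [this]; exact chi_nonneg t
  · have heq : chi =ᶠ[nhds s] fun _ => (0:ℝ) := by
      filter_upwards [isOpen_Ioi.mem_nhds h] with t ht
      simp [chi, not_lt.2 (le_of_lt (show (1:ℝ) < t from ht))]
    rw [heq.deriv_eq, deriv_const]

set_option maxHeartbeats 1000000 in
theorem stmt_9 {m : ℕ} (Ω : Set (Euc (m+1))) (hΩ : IsOpen Ω)
    (X : Euc (m+1) → Euc (m+1)) (hX : ContinuousOn X Ω)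
    (K : Set (Euc (m+1))) (hK : IsCompact K) (hKΩ : K ⊆ Ω)
    (cK CK : ℝ) (hcK : 0 < cK)
    (hXK : ∀ x ∈ K, cK ≤ ‖X x‖ ∧ ‖X x‖ ≤ CK)
    (ε : ℝ) (hε0 : 0 < ε) (hε1 : ε ≤ 1)
    (β : ℝ → ℝ) (hβsm : ContDiff ℝ (⊤ : ℕ∞) β) (hβnn : ∀ s : ℝ, 0 ≤ β s)
    (hβ0 : ∀ s : ℝ, s ≤ -1 → β s = 0)
    (hβ1 : ∀ s : ℝ, -(1/2 : ℝ) ≤ s → β s = 1)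
    (hβ' : ∀ s ∈ Set.Ioo (-1 : ℝ) (-(1/2 : ℝ)), 0 < deriv β s) :
    ∃ δ₀ > (0 : ℝ), ∀ x0 ∈ K, X x0 = EuclideanSpace.single 0 1 →
      ∀ δ : ℝ, 0 < δ → δ ≤ δ₀ →
        (∀ x : Euc (m+1), 0 ≤ gtest X β x0 ε δ x) ∧
        ∃ U ∈ nhds x0, ∀ x ∈ U, 0 < gtest X β x0 ε δ x := by
  obtain ⟨r, hr0, hrΩ⟩ := hK.exists_cthickening_subset_open hΩ hKΩ
  set η : ℝ := ε / 32 with hηdef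
  have hη0 : 0 < η := by positivity
  have hη1 : η ≤ 1/32 := by rw [hηdef]; linarith
  have huc := (hK.cthickening (r := r)).uniformContinuousOn_of_continuous (hX.mono hrΩ)
  rw [Metric.uniformContinuousOn_iff] at huc
  obtain ⟨ρ, hρ0, hρ⟩ := huc η hη0
  refine ⟨min r ρ / 4, by positivity, ?_⟩
  intro x0 hx0K hX0 δ hδ0 hδ
  have hδr : 2 * δ ≤ r := by
    have := min_le_left r ρ; linarith
  have hδρ : 2 * δ < ρ := by
    have := min_le_right r ρ; linarith
  -- key claim: Xv < 0 on the relevant region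
  have key : ∀ x : Euc (m+1), vfun x0 ε δ x < 1 → -1 < wfun x0 ε δ x →
      Xv X x0 ε δ x < 0 := by
    intro x hv hw
    set u : ℝ := (x 0 - x0 0) / δ with hu
    set S : ℝ := ∑ i : Fin m, (x i.succ - x0 i.succ)^2 with hS
    have hS0 : 0 ≤ S := Finset.sum_nonneg fun i _ => sq_nonneg _
    have hεδ : (0:ℝ) < (ε * δ)^2 := by positivity
    have hv' : 1/2 - u + 8 / (ε*δ)^2 * S < 1 := hv
    have hw' : -1 < 2/ε * (1 - u) := hw
    have h2 : 2/ε * (1 - u) * ε = 2*(1-u) := by field_simp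
    have h3 : -1 * ε < 2 * (1 - u) := by
      have := mul_lt_mul_of_pos_right hw' hε0
      rwa [h2] at this
    have hu1 : u ≤ 3/2 := by nlinarith
    have h8S : 0 ≤ 8 / (ε*δ)^2 * S := by positivity
    have hu2 : -(1/2 : ℝ) < u := by nlinarith
    have hSb : S < (ε*δ)^2 / 4 := by
      have h4 : 8 / (ε*δ)^2 * S < 2 := by nlinarith
      have h5 := mul_lt_mul_of_pos_right h4 hεδ
      have h6 : 8 / (ε*δ)^2 * S * (ε*δ)^2 = 8 * S := by field_simp
      rw [h6] at h5
      nlinarith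
    have hx0d : x 0 - x0 0 = u * δ := by rw [hu, div_mul_cancel₀ _ (ne_of_gt hδ0)]
    have hu3 : u^2 ≤ 9/4 := by nlinarith [hu1, hu2]
    have hdist : dist x x0 ≤ 2 * δ := by
      rw [EuclideanSpace.dist_eq]
      have hrest : ∑ i : Fin m, dist (x i.succ) (x0 i.succ) ^ 2 = S := by
        rw [hS]; apply Finset.sum_congr rfl; intro i _
        rw [Real.dist_eq, sq_abs]
      have hsum : ∑ j, dist (x j) (x0 j) ^ 2 ≤ (2*δ)^2 := by
        rw [Fin.sum_univ_succ, hrest, Real.dist_eq, sq_abs, hx0d]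
        have hε2 : ε^2 ≤ 1 := by nlinarith
        nlinarith [sq_nonneg δ, mul_pos hδ0 hδ0]
      calc √(∑ j, dist (x j) (x0 j) ^ 2) ≤ √((2*δ)^2) := Real.sqrt_le_sqrt hsum
        _ = 2*δ := Real.sqrt_sq (by positivity)
    have hxK' : x ∈ cthickening r K :=
      mem_cthickening_of_dist_le x x0 r K hx0K (hdist.trans hδr)
    have hx0K' : x0 ∈ cthickening r K := self_subset_cthickening K hx0K
    have hXd : dist (X x) (X x0) < η := hρ x hxK' x0 hx0K' (lt_of_le_of_lt hdist hδρ)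
    have hA : ∑ j, dist (X x j) (X x0 j) ^ 2 < η^2 := by
      rw [EuclideanSpace.dist_eq] at hXd
      exact (Real.sqrt_lt' hη0).mp hXd
    have hX00 : X x0 0 = 1 := by rw [hX0, EuclideanSpace.single_apply, if_pos rfl]
    have hX0s : ∀ i : Fin m, X x0 i.succ = 0 := by
      intro i; rw [hX0, EuclideanSpace.single_apply, if_neg (Fin.succ_ne_zero i)]
    rw [Fin.sum_univ_succ] at hA
    have hAs : ∑ i : Fin m, (X x i.succ)^2 < η^2 := by
      have he : ∀ i : Fin m, dist (X x i.succ) (X x0 i.succ) ^ 2 = (X x i.succ)^2 := by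
        intro i; rw [hX0s i, Real.dist_eq, sub_zero, sq_abs]
      rw [Finset.sum_congr rfl (fun i _ => he i)] at hA
      nlinarith [sq_nonneg (dist (X x 0) (X x0 0))]
    have hA0 : (X x 0 - 1)^2 < η^2 := by
      have he : dist (X x 0) (X x0 0) ^ 2 = (X x 0 - 1)^2 := by
        rw [hX00, Real.dist_eq, sq_abs]
      rw [he] at hA
      have : (0:ℝ) ≤ ∑ i : Fin m, dist (X x i.succ) (X x0 i.succ) ^ 2 :=
        Finset.sum_nonneg fun i _ => sq_nonneg _
      nlinarith
    have hX0lb : 1 - η < X x 0 := by nlinarith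
    set T : ℝ := ∑ i : Fin m, X x i.succ * (x i.succ - x0 i.succ) with hT
    have hCS := Finset.sum_mul_sq_le_sq_mul_sq Finset.univ
      (fun i : Fin m => X x i.succ) (fun i => x i.succ - x0 i.succ)
    have hsumnn : (0:ℝ) ≤ ∑ i : Fin m, (X x i.succ)^2 :=
      Finset.sum_nonneg fun i _ => sq_nonneg _
    have hT2 : T^2 < η^2 * ((ε*δ)^2/4) := by
      calc T^2 ≤ (∑ i : Fin m, (X x i.succ)^2) * S := hCS
        _ < η^2 * ((ε*δ)^2/4) := by nlinarith
    have hTle : T ≤ η * (ε*δ/2) := by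
      have h1 : T^2 ≤ (∑ i : Fin m, (X x i.succ)^2) * S := hCS
      have h2 : S < (ε*δ/2)^2 := by nlinarith [hSb]
      exact helper_Tle η (ε*δ/2) T _ S hη0 (by positivity) hsumnn hAs hS0 h2 h1
    have hXveq : Xv X x0 ε δ x = X x 0 * (-(1/δ)) + 16 / (ε*δ)^2 * T := rfl
    rw [hXveq]
    exact helper_final ε δ η (X x 0) T hε0 hε1 hδ0 hηdef hX0lb hTle
  refine ⟨?_, ?_⟩
  · intro x
    by_cases hv : vfun x0 ε δ x < 1
    · by_cases hw : -1 < wfun x0 ε δ x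
      · have h1 := deriv_chi_neg hv
        have h2 := hβnn (wfun x0 ε δ x)
        have h3 := key x hv hw
        have h4 : deriv chi (vfun x0 ε δ x) * β (wfun x0 ε δ x) ≤ 0 :=
          mul_nonpos_of_nonpos_of_nonneg h1.le h2
        have h5 := mul_nonneg (neg_nonneg.2 h4) (neg_nonneg.2 h3.le)
        rw [neg_mul_neg] at h5
        exact h5
      · rw [not_lt] at hw
        show 0 ≤ deriv chi (vfun x0 ε δ x) * β (wfun x0 ε δ x) * Xv X x0 ε δ x
        rw [hβ0 _ hw, mul_zero, zero_mul]
    · rw [not_lt] at hv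
      show 0 ≤ deriv chi (vfun x0 ε δ x) * β (wfun x0 ε δ x) * Xv X x0 ε δ x
      rw [deriv_chi_of_ge hv, zero_mul, zero_mul]
  · have hcoord : ∀ j : Fin (m+1), Continuous fun x : Euc (m+1) => x j :=
      fun j => (EuclideanSpace.proj (𝕜 := ℝ) j).continuous
    have hcv : Continuous (vfun x0 ε δ) := by
      unfold vfun
      exact (continuous_const.sub
          (((hcoord 0).sub continuous_const).div_const δ)).add
        (continuous_const.mul (continuous_finset_sum _ fun i _ =>
          ((hcoord i.succ).sub continuous_const).pow 2))
    have hcw : Continuous (wfun x0 ε δ) := by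
      unfold wfun
      exact continuous_const.mul
        (continuous_const.sub (((hcoord 0).sub continuous_const).div_const δ))
    refine ⟨{x | vfun x0 ε δ x < 1 ∧ -(1/2:ℝ) < wfun x0 ε δ x}, ?_, ?_⟩
    · apply IsOpen.mem_nhds
      · exact (isOpen_lt hcv continuous_const).inter (isOpen_lt continuous_const hcw)
      · constructor
        · have : vfun x0 ε δ x0 = 1/2 := by simp [vfun]
          rw [this]; norm_num
        · have : wfun x0 ε δ x0 = 2/ε := by simp [wfun]
          rw [this]
          have : 0 < 2/ε := by positivity
          linarith
    · rintro x ⟨hv, hw2⟩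
      have hw : -1 < wfun x0 ε δ x := by linarith
      have h3 := key x hv hw
      have h1 := deriv_chi_neg hv
      have hβw : β (wfun x0 ε δ x) = 1 := hβ1 _ hw2.le
      unfold gtest
      rw [hβw, mul_one]
      exact mul_pos_of_neg_of_neg h1 h3
end
end

section
/- Let X be a continuous vector field on an open set Ω ⊆ ℝ^d, F ⊆ Ω closed in Ω, and suppose every point x ∈ F lies on some integral curve γ : I → F of X defined on an open interval I ∋ 0 with γ(0) = x and γ(I) ⊆ F. Then every point of F lies on a *maximal* integral curve of X entirely contained in F (continuation argument: any integral curve contained in the closed set F extends to a maximal integral curve still contained in F). -/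
open Set Metric MeasureTheory

noncomputable section

def IsIntCurveOn {d : ℕ} (X : Euc d → Euc d) (Ω : Set (Euc d))
    (γ : ℝ → Euc d) (I : Set ℝ) : Prop :=
  ∀ s ∈ I, γ s ∈ Ω ∧ HasDerivAt γ (X (γ s)) s

def IsMaxIntCurveOn {d : ℕ} (X : Euc d → Euc d) (Ω : Set (Euc d))
    (γ : ℝ → Euc d) (I : Set ℝ) : Prop :=
  IsIntCurveOn X Ω γ I ∧
    ∀ (δ : ℝ → Euc d) (J : Set ℝ), J.OrdConnected → I ⊆ J →
      IsIntCurveOn X Ω δ J → Set.EqOn δ γ I → J = I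

/-!
Zorn's lemma, applied to the integral curves of `X` that live on open intervals and take values
in `F`, ordered by extension, gives a curve `γ` on `I` through `x` that no such curve extends.
It is maximal among all integral curves in `Ω`: if `δ` extends `γ` to a larger interval, say past
`b = sup I`, then `δ b` is a limit of points of `F` lying in `Ω`, so `δ b ∈ F`, and an integral
curve in `F` through `δ b` can be glued to `γ` at `b`, a contradiction. The glued curve is
differentiable at `b` because it agrees with `δ` on the left of `b`. The lower end is reduced to
the upper one by reversing time.
-/

open Filter Topology Pointwise

theorem HasDerivAt.of_eventuallyEq_nhdsLE_nhdsGE {E : Type*} [NormedAddCommGroup E]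
    [NormedSpace ℝ E] {f g h : ℝ → E} {v : E} {b : ℝ} (hf : HasDerivAt f v b)
    (hg : HasDerivAt g v b) (hhf : h =ᶠ[𝓝[≤] b] f) (hhg : h =ᶠ[𝓝[≥] b] g) :
    HasDerivAt h v b := by
  have hle := hf.hasDerivWithinAt.congr_of_eventuallyEq hhf (hhf.eq_of_nhdsWithin self_mem_Iic)
  have hge := hg.hasDerivWithinAt.congr_of_eventuallyEq hhg (hhg.eq_of_nhdsWithin self_mem_Ici)
  simpa only [Iic_union_Ici, hasDerivWithinAt_univ] using hle.union hge

theorem IsOpen.csSup_notMem {I : Set ℝ} (hI : IsOpen I) (hbdd : BddAbove I) : sSup I ∉ I :=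
  fun hb ↦
    let ⟨_, hbc, hc⟩ := Filter.Eventually.exists_gt (hI.mem_nhds hb)
    (le_csSup hbdd hc).not_gt hbc

theorem Set.OrdConnected.neg {I : Set ℝ} (hI : I.OrdConnected) : (-I).OrdConnected :=
  hI.preimage_anti fun _ _ ↦ neg_le_neg

theorem Set.OrdConnected.Ioo_csSup_subset {I : Set ℝ} (hI : I.OrdConnected) {a : ℝ}
    (ha : a ∈ I) : Ioo a (sSup I) ⊆ I := fun _ hu ↦
  let ⟨_, hs, hus⟩ := exists_lt_of_lt_csSup ⟨a, ha⟩ hu.2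
  hI.out ha hs ⟨hu.1.le, hus.le⟩

variable {d : ℕ} {X : Euc d → Euc d} {Ω F : Set (Euc d)}

namespace IsIntCurveOn

variable {γ : ℝ → Euc d} {I : Set ℝ}

theorem mono {J : Set ℝ} (hγ : IsIntCurveOn X Ω γ J) (hIJ : I ⊆ J) : IsIntCurveOn X Ω γ I :=
  fun s hs ↦ hγ s (hIJ hs)

theorem congr {Γ : ℝ → Euc d} (hγ : IsIntCurveOn X Ω γ I) (hI : IsOpen I) (hΓ : EqOn Γ γ I) :
    IsIntCurveOn X Ω Γ I := fun s hs ↦ by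
  rw [hΓ hs]
  exact ⟨(hγ s hs).1, (hγ s hs).2.congr_of_eventuallyEq (hΓ.eventuallyEq_of_mem (hI.mem_nhds hs))⟩

theorem comp_sub_const (hγ : IsIntCurveOn X Ω γ I) (b : ℝ) :
    IsIntCurveOn X Ω (fun s ↦ γ (s - b)) ((· - b) ⁻¹' I) :=
  fun s hs ↦ ⟨(hγ _ hs).1, (hγ _ hs).2.comp_sub_const s b⟩

theorem comp_neg (hγ : IsIntCurveOn X Ω γ I) : IsIntCurveOn (-X) Ω (fun s ↦ γ (-s)) (-I) :=
  fun s hs ↦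
    ⟨(hγ _ hs).1, by simpa [Function.comp_def] using (hγ _ hs).2.scomp s (hasDerivAt_neg s)⟩

theorem ite_lt {τ δ : ℝ → Euc d} {a b c : ℝ} (hγ : IsIntCurveOn X Ω γ I) (hI : IsOpen I)
    (hIb : I ⊆ Iio b) (habI : Ioo a b ⊆ I) (hτ : IsIntCurveOn X Ω τ (Ioo a c))
    (hb : b ∈ Ioo a c) (hδ : HasDerivAt δ (X (δ b)) b) (hδγ : EqOn δ γ (Ioo a b))
    (hτδ : τ b = δ b) :
    IsIntCurveOn X Ω (fun s ↦ if s < b then γ s else τ s) (I ∪ Ioo a c) := by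
  set η := fun s ↦ if s < b then γ s else τ s
  have hηγ : EqOn η γ (Iio b) := fun s hs ↦ if_pos hs
  have hητ : EqOn η τ (Ici b) := fun s hs ↦ if_neg (not_lt.2 hs)
  have hηδ : EqOn η δ (Ioc a b) := fun u hu ↦ by
    rcases hu.2.lt_or_eq with hub | rfl
    · rw [hηγ hub, hδγ ⟨hu.1, hub⟩]
    · rw [hητ self_mem_Ici, hτδ]
  intro s hs
  rcases lt_trichotomy s b with hsb | rfl | hbs
  · exact (hγ.congr hI (hηγ.mono hIb)) s (hs.elim id fun hs ↦ habI ⟨hs.1, hsb⟩)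
  · obtain ⟨hτΩ, hτ'⟩ := hτ s hb
    rw [hτδ] at hτΩ hτ'
    rw [hηδ ⟨hb.1, le_rfl⟩]
    exact ⟨hτΩ, hδ.of_eventuallyEq_nhdsLE_nhdsGE hτ'
      (hηδ.eventuallyEq_of_mem (Ioc_mem_nhdsLE hb.1)) hητ.eventuallyEq_nhdsWithin⟩
  · have hsc : s < c := (hs.resolve_left fun hsI ↦ (hIb hsI).not_gt hbs).2
    exact ((hτ.mono (Ioo_subset_Ioo_left hb.1.le)).congr isOpen_Ioo
      (hητ.mono fun _ hu ↦ hu.1.le)) s ⟨hbs, hsc⟩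

end IsIntCurveOn

def IsOpenIntCurveIn (X : Euc d → Euc d) (Ω F : Set (Euc d)) (γ : ℝ → Euc d) (I : Set ℝ) :
    Prop :=
  IsOpen I ∧ I.OrdConnected ∧ IsIntCurveOn X Ω γ I ∧ γ '' I ⊆ F

def HasLocalIntCurvesIn (X : Euc d → Euc d) (Ω F : Set (Euc d)) : Prop :=
  ∀ x ∈ F, ∃ (γ : ℝ → Euc d) (I : Set ℝ), IsOpenIntCurveIn X Ω F γ I ∧ (0 : ℝ) ∈ I ∧ γ 0 = x

namespace IsOpenIntCurveIn

variable {γ δ : ℝ → Euc d} {I J : Set ℝ}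

theorem congr {Γ : ℝ → Euc d} (hγ : IsOpenIntCurveIn X Ω F γ I) (hΓ : EqOn Γ γ I) :
    IsOpenIntCurveIn X Ω F Γ I :=
  ⟨hγ.1, hγ.2.1, hγ.2.2.1.congr hγ.1 hΓ, hΓ.image_eq ▸ hγ.2.2.2⟩

theorem comp_neg (hγ : IsOpenIntCurveIn X Ω F γ I) :
    IsOpenIntCurveIn (-X) Ω F (fun s ↦ γ (-s)) (-I) := by
  obtain ⟨hopen, hconn, hint, himage⟩ := hγ
  refine ⟨hopen.neg, hconn.neg, hint.comp_neg, ?_⟩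
  rintro _ ⟨s, hs, rfl⟩
  exact himage ⟨-s, hs, rfl⟩

theorem _root_.HasLocalIntCurvesIn.neg (h : HasLocalIntCurvesIn X Ω F) :
    HasLocalIntCurvesIn (-X) Ω F := fun x hx ↦
  let ⟨_, _, hγ, h0, hγ0⟩ := h x hx
  ⟨_, _, hγ.comp_neg, by simpa using h0, by simpa using hγ0⟩

theorem ite_lt {τ : ℝ → Euc d} {a b c : ℝ} (hγ : IsOpenIntCurveIn X Ω F γ I) (hIb : I ⊆ Iio b)
    (habI : Ioo a b ⊆ I) (hτ : IsOpenIntCurveIn X Ω F τ (Ioo a c)) (hb : b ∈ Ioo a c)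
    (hδ : HasDerivAt δ (X (δ b)) b) (hδγ : EqOn δ γ (Ioo a b)) (hτδ : τ b = δ b) :
    IsOpenIntCurveIn X Ω F (fun s ↦ if s < b then γ s else τ s) (I ∪ Ioo a c) := by
  obtain ⟨hIopen, hIconn, hγint, hγF⟩ := hγ
  have hmid : (a + b) / 2 ∈ I ∩ Ioo a c :=
    ⟨habI ⟨by linarith [hb.1], by linarith [hb.1]⟩, by linarith [hb.1], by linarith [hb.1, hb.2]⟩
  refine ⟨hIopen.union isOpen_Ioo, ?_,
    hγint.ite_lt hIopen hIb habI hτ.2.2.1 hb hδ hδγ hτδ, ?_⟩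
  · rw [← isPreconnected_iff_ordConnected] at hIconn ⊢
    exact hIconn.union' ⟨_, hmid⟩ isPreconnected_Ioo
  · rintro _ ⟨s, hs, rfl⟩
    by_cases hsb : s < b
    · simp only [if_pos hsb]
      exact hγF ⟨s, hs.elim id fun hs ↦ habI ⟨hs.1, hsb⟩, rfl⟩
    · simp only [if_neg hsb]
      exact hτ.2.2.2 ⟨s, hs.elim (fun hs ↦ absurd (hIb hs) hsb) id, rfl⟩

theorem exists_extension_to_csSup (hF : closure F ∩ Ω ⊆ F)
    (hloc : HasLocalIntCurvesIn X Ω F) (hγ : IsOpenIntCurveIn X Ω F γ I) (hI : I.Nonempty)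
    (hbdd : BddAbove I) (hδΩ : δ (sSup I) ∈ Ω) (hδ : HasDerivAt δ (X (δ (sSup I))) (sSup I))
    (hδγ : EqOn δ γ I) :
    ∃ η K, IsOpenIntCurveIn X Ω F η K ∧ I ⊆ K ∧ EqOn η γ I ∧ sSup I ∈ K := by
  set b := sSup I
  obtain ⟨a₀, ha₀⟩ := hI
  have hIb : I ⊆ Iio b := fun s hs ↦
    (le_csSup hbdd hs).lt_of_ne (ne_of_mem_of_not_mem hs (hγ.1.csSup_notMem hbdd))
  have hδF : δ b ∈ F := by
    refine hF ⟨mem_closure_of_tendsto (hδ.continuousAt.continuousWithinAt (s := Iio b)) ?_, hδΩ⟩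
    filter_upwards [Ioo_mem_nhdsLT (hIb ha₀)] with u hu
    have huI := hγ.2.1.Ioo_csSup_subset ha₀ hu
    exact hδγ huI ▸ hγ.2.2.2 (mem_image_of_mem _ huI)
  obtain ⟨σ, I', hσ, h0, hσ0⟩ := hloc _ hδF
  obtain ⟨ε, hε, hεI'⟩ := Metric.isOpen_iff.1 hσ.1 0 h0
  obtain ⟨a, haI, hεa⟩ := exists_lt_of_lt_csSup ⟨a₀, ha₀⟩ (sub_lt_self b hε)
  have hshift : Ioo a (b + ε) ⊆ (· - b) ⁻¹' I' := fun u hu ↦ hεI' <| by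
    rw [Real.ball_eq_Ioo]
    exact ⟨by linarith [hu.1], by linarith [hu.2]⟩
  have hτ : IsOpenIntCurveIn X Ω F (fun s ↦ σ (s - b)) (Ioo a (b + ε)) := by
    refine ⟨isOpen_Ioo, ordConnected_Ioo, (hσ.2.2.1.comp_sub_const b).mono hshift, ?_⟩
    rintro _ ⟨u, hu, rfl⟩
    exact hσ.2.2.2 (mem_image_of_mem _ (hshift hu))
  have hbK : b ∈ Ioo a (b + ε) := ⟨hIb haI, by linarith⟩
  have habI : Ioo a b ⊆ I := hγ.2.1.Ioo_csSup_subset haI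
  exact ⟨_, _, hγ.ite_lt hIb habI hτ hbK hδ (hδγ.mono habI) (by simp [hσ0]),
    subset_union_left, fun s hs ↦ if_pos (hIb hs), Or.inr hbK⟩

theorem exists_strict_extension_of_mem_upperBounds (hF : closure F ∩ Ω ⊆ F)
    (hloc : HasLocalIntCurvesIn X Ω F) (hγ : IsOpenIntCurveIn X Ω F γ I) (hI : I.Nonempty)
    (hJ : J.OrdConnected) (hIJ : I ⊆ J) (hδ : IsIntCurveOn X Ω δ J) (hδγ : EqOn δ γ I) {t : ℝ}
    (ht : t ∈ J) (htI : t ∈ upperBounds I) :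
    ∃ η K, IsOpenIntCurveIn X Ω F η K ∧ I ⊆ K ∧ EqOn η γ I ∧ ¬ K ⊆ I := by
  obtain ⟨a, ha⟩ := hI
  have hbdd : BddAbove I := ⟨t, htI⟩
  have hbJ : sSup I ∈ J := hJ.out (hIJ ha) ht ⟨le_csSup hbdd ha, csSup_le ⟨a, ha⟩ htI⟩
  obtain ⟨η, K, hη, hIK, hηγ, hbK⟩ :=
    hγ.exists_extension_to_csSup hF hloc ⟨a, ha⟩ hbdd (hδ _ hbJ).1 (hδ _ hbJ).2 hδγ
  exact ⟨η, K, hη, hIK, hηγ, fun hKI ↦ hγ.1.csSup_notMem hbdd (hKI hbK)⟩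

theorem exists_strict_extension (hF : closure F ∩ Ω ⊆ F) (hloc : HasLocalIntCurvesIn X Ω F)
    (hγ : IsOpenIntCurveIn X Ω F γ I) (hI : I.Nonempty) (hJ : J.OrdConnected) (hIJ : I ⊆ J)
    (hδ : IsIntCurveOn X Ω δ J) (hδγ : EqOn δ γ I) (hJI : ¬ J ⊆ I) :
    ∃ η K, IsOpenIntCurveIn X Ω F η K ∧ I ⊆ K ∧ EqOn η γ I ∧ ¬ K ⊆ I := by
  obtain ⟨t, htJ, htI⟩ := not_subset.1 hJI
  by_cases hup : t ∈ upperBounds I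
  · exact hγ.exists_strict_extension_of_mem_upperBounds hF hloc hI hJ hIJ hδ hδγ htJ hup
  have hlow : -t ∈ upperBounds (-I) := by
    obtain ⟨s, hs, hts⟩ := not_forall₂.1 hup
    intro u hu
    by_contra hut
    exact htI (hγ.2.1.out hu hs ⟨by linarith [not_le.1 hut], (not_le.1 hts).le⟩)
  obtain ⟨η, K, hη, hIK, hηγ, hKI⟩ :=
    hγ.comp_neg.exists_strict_extension_of_mem_upperBounds hF hloc.neg (by simpa using hI)
      hJ.neg (neg_subset_neg.2 hIJ) hδ.comp_neg (fun s hs ↦ hδγ hs) (by simpa using htJ) hlow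
  refine ⟨fun s ↦ η (-s), -K, by simpa only [neg_neg] using hη.comp_neg, neg_subset.1 hIK,
    fun s hs ↦ by simpa using hηγ (x := -s) (by simpa using hs), fun hKI' ↦ hKI (neg_subset.1 hKI')⟩

end IsOpenIntCurveIn

structure OpenIntCurveIn (X : Euc d → Euc d) (Ω F : Set (Euc d)) where
  curve : ℝ → Euc d
  domain : Set ℝ
  isOpenIntCurveIn : IsOpenIntCurveIn X Ω F curve domain

namespace OpenIntCurveIn

instance : Preorder (OpenIntCurveIn X Ω F) where
  le p q := p.domain ⊆ q.domain ∧ EqOn q.curve p.curve p.domain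
  le_refl _ := ⟨subset_rfl, eqOn_refl _ _⟩
  le_trans _ _ _ hpq hqr := ⟨hpq.1.trans hqr.1, (hqr.2.mono hpq.1).trans hpq.2⟩

theorem bddAbove_of_isChain {c : Set (OpenIntCurveIn X Ω F)} (hc : IsChain (· ≤ ·) c) :
    BddAbove c := by
  classical
  have hmem : ∀ {t}, t ∈ ⋃ p ∈ c, p.domain ↔ ∃ p ∈ c, t ∈ p.domain := by simp
  let Γ : ℝ → Euc d := fun t ↦ if h : ∃ p ∈ c, t ∈ p.domain then h.choose.curve t else 0
  have hΓ : ∀ p ∈ c, EqOn Γ p.curve p.domain := by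
    intro p hp t ht
    have h : ∃ q ∈ c, t ∈ q.domain := ⟨p, hp, ht⟩
    obtain ⟨hq, htq⟩ := h.choose_spec
    simp only [Γ, dif_pos h]
    rcases hc.total hq hp with hqp | hpq
    · exact (hqp.2 htq).symm
    · exact hpq.2 ht
  have hΓc : ∀ p ∈ c, IsOpenIntCurveIn X Ω F Γ p.domain :=
    fun p hp ↦ p.isOpenIntCurveIn.congr (hΓ p hp)
  refine ⟨⟨Γ, ⋃ p ∈ c, p.domain, isOpen_biUnion fun p _ ↦ p.isOpenIntCurveIn.1, ⟨?_⟩, ?_, ?_⟩,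
    fun p hp ↦ ⟨subset_biUnion_of_mem hp, hΓ p hp⟩⟩
  · intro u hu v hv
    obtain ⟨p, hp, hup⟩ := hmem.1 hu
    obtain ⟨q, hq, hvq⟩ := hmem.1 hv
    rcases hc.total hp hq with hpq | hqp
    · exact (q.isOpenIntCurveIn.2.1.out (hpq.1 hup) hvq).trans (subset_biUnion_of_mem hq)
    · exact (p.isOpenIntCurveIn.2.1.out hup (hqp.1 hvq)).trans (subset_biUnion_of_mem hp)
  · intro s hs
    obtain ⟨p, hp, hsp⟩ := hmem.1 hs
    exact (hΓc p hp).2.2.1 s hsp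
  · rintro _ ⟨s, hs, rfl⟩
    obtain ⟨p, hp, hsp⟩ := hmem.1 hs
    exact (hΓc p hp).2.2.2 (mem_image_of_mem Γ hsp)

theorem exists_le_isMax (p : OpenIntCurveIn X Ω F) : ∃ m, p ≤ m ∧ IsMax m :=
  zorn_le_nonempty_Ici₀ p (fun _ _ hc _ _ ↦ bddAbove_of_isChain hc) p le_rfl

end OpenIntCurveIn

theorem stmt_19_general {d : ℕ} (Ω : Set (Euc d)) (X : Euc d → Euc d) (F : Set (Euc d))
    (hFcl : ∃ C : Set (Euc d), IsClosed C ∧ F = C ∩ Ω)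
    (hloc : ∀ x ∈ F, ∃ (γ : ℝ → Euc d) (I : Set ℝ),
      IsOpen I ∧ I.OrdConnected ∧ (0 : ℝ) ∈ I ∧ γ 0 = x ∧
      IsIntCurveOn X Ω γ I ∧ γ '' I ⊆ F) :
    ∀ x ∈ F, ∃ (γ : ℝ → Euc d) (I : Set ℝ),
      I.OrdConnected ∧ (0 : ℝ) ∈ I ∧ γ 0 = x ∧
      IsMaxIntCurveOn X Ω γ I ∧ γ '' I ⊆ F := by
  have hF : closure F ∩ Ω ⊆ F := by
    obtain ⟨C, hC, rfl⟩ := hFcl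
    exact inter_subset_inter_left _ (closure_minimal inter_subset_left hC)
  have hlocal : HasLocalIntCurvesIn X Ω F := fun x hx ↦
    let ⟨γ, I, hopen, hconn, h0, hγ0, hint, himage⟩ := hloc x hx
    ⟨γ, I, ⟨hopen, hconn, hint, himage⟩, h0, hγ0⟩
  intro x hx
  obtain ⟨γ, I, hγ, h0, hγ0⟩ := hlocal x hx
  obtain ⟨m, ⟨hIm, hmγ⟩, hmax⟩ := OpenIntCurveIn.exists_le_isMax ⟨γ, I, hγ⟩
  have hm := m.isOpenIntCurveIn
  refine ⟨m.curve, m.domain, hm.2.1, hIm h0, (hmγ h0).trans hγ0,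
    ⟨hm.2.2.1, fun δ J hJ hmJ hδ hδm ↦ Subset.antisymm (by_contra fun hJm ↦ ?_) hmJ⟩, hm.2.2.2⟩
  obtain ⟨η, K, hη, hmK, hηm, hKm⟩ :=
    hm.exists_strict_extension hF hlocal ⟨0, hIm h0⟩ hJ hmJ hδ hδm hJm
  exact hKm (hmax (b := ⟨η, K, hη⟩) ⟨hmK, hηm⟩).1

theorem stmt_19 {d : ℕ} (Ω : Set (Euc d)) (hΩ : IsOpen Ω)
    (X : Euc d → Euc d) (hX : ContinuousOn X Ω)
    (F : Set (Euc d)) (hFΩ : F ⊆ Ω)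
    (hFcl : ∃ C : Set (Euc d), IsClosed C ∧ F = C ∩ Ω)
    (hloc : ∀ x ∈ F, ∃ (γ : ℝ → Euc d) (I : Set ℝ),
      IsOpen I ∧ I.OrdConnected ∧ (0 : ℝ) ∈ I ∧ γ 0 = x ∧
      IsIntCurveOn X Ω γ I ∧ γ '' I ⊆ F) :
    ∀ x ∈ F, ∃ (γ : ℝ → Euc d) (I : Set ℝ),
      I.OrdConnected ∧ (0 : ℝ) ∈ I ∧ γ 0 = x ∧
      IsMaxIntCurveOn X Ω γ I ∧ γ '' I ⊆ F :=
  stmt_19_general Ω X F hFcl hloc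
end
end
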